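/- In the n-vertex Nash bargaining counterexample instance, the symmetric Nash product g(y) = (1 − (n−1)y)·((n−1)y)·y^{n−1} over y ∈ [0, 1/(n−1)] is maximized at y = n/(n²−1), and consequently at the Nash bargaining solution, agent i receives utility 1/(n+1) while agent i' receives u_i-value n/(n+1), i.e., u_i·x_i = (1/n)·u_i·x_{i'}, even though every agent in B weakly prefers i to i'. -/

import Mathlib

/-!
Write `n = m + 2`. The dummies of `A` and the agent `j` of `B` always have utility 1 at a
perfect matching, so the Nash product of `x` is `x_{ij} · x_{i'j} · ∏_{k ≠ j} x_{ik}`.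
Column `j` gives `x_{i'j} ≤ 1 - x_{ij}`, and AM-GM on row `i` bounds the product by
`g((1 - x_{ij}) / (n - 1))`. Conversely every value `g(y)` is attained by the symmetric
allocation with parameter `y`. Finally `g(y) = (n - 1) y^n (1 - (n - 1) y)` has the unique
maximiser `y* = n / (n² - 1)` on `y ≥ 0`: writing `y = s y*`, `g(y) / g(y*) = s^n (n + 1 - n s)`,
and `1 - s^p (p + 1 - p s) = (1 - s)² ∑_{k < p} (k + 1) s^k`. Hence at a maximiser all these
inequalities are tight, which pins down `x_{ij} = 1/(n + 1)` and `x_{i'j} = n/(n + 1)`.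
-/

def isPM {n : ℕ} (x : Fin n → Fin n → ℝ) : Prop :=
  (∀ i j, 0 ≤ x i j) ∧ (∀ i, ∑ j, x i j = 1) ∧ (∀ j, ∑ i, x i j = 1)

def utilA {n : ℕ} (u x : Fin n → Fin n → ℝ) (i : Fin n) : ℝ := ∑ j, u i j * x i j

def utilB {n : ℕ} (w x : Fin n → Fin n → ℝ) (j : Fin n) : ℝ := ∑ i, w j i * x i j

/-- Side-A utilities of the counterexample instance on `n = m + 2` agents per side:
special agents `i = 0` and `i' = 1` have utility 1 for `j = 0` and 0 otherwise;
the dummy agents have identical utilities (1 for everyone in B). -/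
def uCE (m : ℕ) : Fin (m + 2) → Fin (m + 2) → ℝ := fun i j =>
  if i = 0 ∨ i = 1 then (if j = 0 then 1 else 0) else 1

/-- Side-B utilities: every agent in `B \ {j}` (i.e. `j ≠ 0`) has utility 1 for `i = 0`
and 0 for everyone else; agent `j = 0` has identical utilities for everyone. -/
def wCE (m : ℕ) : Fin (m + 2) → Fin (m + 2) → ℝ := fun j i =>
  if j = 0 then 1 else (if i = 0 then 1 else 0)

namespace Real

theorem prod_le_sum_div_card_pow {ι : Type*} (s : Finset ι) {f : ι → ℝ}
    (hf : ∀ i ∈ s, 0 ≤ f i) :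
    ∏ i ∈ s, f i ≤ ((∑ i ∈ s, f i) / s.card) ^ s.card := by
  rcases s.eq_empty_or_nonempty with rfl | hs
  · simp
  have hcard : (0 : ℝ) < s.card := by exact_mod_cast hs.card_pos
  have amgm := geom_mean_le_arith_mean s (fun _ => 1) f (fun _ _ => zero_le_one)
    (by simpa using hcard) hf
  simp only [rpow_one, one_mul, Finset.sum_const, nsmul_eq_mul, mul_one] at amgm
  have hprod : 0 ≤ ∏ i ∈ s, f i := Finset.prod_nonneg hf
  calc ∏ i ∈ s, f i = ((∏ i ∈ s, f i) ^ (s.card : ℝ)⁻¹) ^ s.card := by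
        rw [← rpow_natCast, ← rpow_mul hprod, inv_mul_cancel₀ hcard.ne', rpow_one]
    _ ≤ _ := pow_le_pow_left₀ (rpow_nonneg hprod _) amgm _

end Real

theorem one_sub_pow_mul_eq_sq_mul_sum (p : ℕ) (s : ℝ) :
    1 - s ^ p * (p + 1 - p * s) = (1 - s) ^ 2 * ∑ k ∈ Finset.range p, (k + 1) * s ^ k := by
  induction p with
  | zero => simp
  | succ p ih =>
    rw [Finset.sum_range_succ, mul_add, ← ih]
    push_cast
    ring

theorem pow_mul_sub_lt_one {p : ℕ} (hp : p ≠ 0) {s : ℝ} (hs : 0 ≤ s) (hs1 : s ≠ 1) :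
    s ^ p * (p + 1 - p * s) < 1 := by
  have hsum : 0 < ∑ k ∈ Finset.range p, ((k : ℝ) + 1) * s ^ k :=
    zero_lt_one.trans_le <| by
      simpa using Finset.single_le_sum (f := fun k : ℕ => ((k : ℝ) + 1) * s ^ k)
        (fun k _ => by positivity) (Finset.mem_range.2 (Nat.pos_of_ne_zero hp))
  have hid := one_sub_pow_mul_eq_sq_mul_sum p s
  have hsq : 0 < (1 - s) ^ 2 := by positivity [sub_ne_zero.mpr hs1.symm]
  nlinarith [mul_pos hsq hsum]

theorem pow_mul_one_sub_mul_lt {p : ℕ} (hp : p ≠ 0) {q y : ℝ} (hq : 0 < q) (hy : 0 ≤ y)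
    (hne : y ≠ p / (q * (p + 1))) :
    y ^ p * (1 - q * y) < (p / (q * (p + 1))) ^ p * (1 - q * (p / (q * (p + 1)))) := by
  set t : ℝ := p / (q * (p + 1)) with ht
  have hp' : (0 : ℝ) < p := by exact_mod_cast Nat.pos_of_ne_zero hp
  have ht0 : 0 < t := by positivity
  have hscale : ∀ s : ℝ, (s * t) ^ p * (1 - q * (s * t)) =
      t ^ p / (p + 1) * (s ^ p * (p + 1 - p * s)) := by
    intro s
    rw [ht]
    field_simp
    ring
  have hlt := pow_mul_sub_lt_one hp (div_nonneg hy ht0.le)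
    (by rwa [Ne, div_eq_one_iff_eq ht0.ne'])
  have hy_scaled := hscale (y / t)
  have ht_scaled := hscale 1
  rw [div_mul_cancel₀ _ ht0.ne'] at hy_scaled
  rw [one_mul] at ht_scaled
  rw [hy_scaled, ht_scaled]
  have : 0 < t ^ p / (p + 1) := by positivity
  simp only [one_pow, mul_one, add_sub_cancel_left]
  nlinarith

theorem Fin.sum_ite_eq_zero {n : ℕ} (α β : ℝ) :
    ∑ j : Fin (n + 1), (if j = 0 then α else β) = α + n * β := by
  simp [Fin.sum_univ_succ, Fin.succ_ne_zero]

theorem Fin.sum_ite_eq_zero_ite_eq_one {n : ℕ} (α β γ : ℝ) :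
    ∑ i : Fin (n + 2), (if i = 0 then α else if i = 1 then β else γ) = α + β + n * γ := by
  simp [Fin.sum_univ_succ, Fin.succ_ne_zero, Fin.succ_succ_ne_one, add_assoc]

def nashProduct {n : ℕ} (u w x : Fin n → Fin n → ℝ) : ℝ :=
  (∏ i, utilA u x i) * ∏ j, utilB w x j

section Counterexample

variable {m : ℕ}

theorem sum_uCE_mul_of_special {i : Fin (m + 2)} (hi : i = 0 ∨ i = 1) (v : Fin (m + 2) → ℝ) :
    ∑ j, uCE m i j * v j = v 0 := by
  simp [uCE, hi]

theorem nashProduct_uCE_wCE {x : Fin (m + 2) → Fin (m + 2) → ℝ}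
    (hrow : ∀ i, ∑ j, x i j = 1) (hcol : ∑ i, x i 0 = 1) :
    nashProduct (uCE m) (wCE m) x = x 0 0 * x 1 0 * ∏ j : Fin (m + 1), x 0 j.succ := by
  have hA : ∏ i, utilA (uCE m) x i = x 0 0 * x 1 0 := by
    have hdummy : ∀ i : Fin m, utilA (uCE m) x i.succ.succ = 1 := fun i => by
      simpa [utilA, uCE, Fin.succ_ne_zero, Fin.succ_succ_ne_one] using hrow i.succ.succ
    simp only [Fin.prod_univ_succ (n := m + 1), Fin.prod_univ_succ (n := m), hdummy]
    simp [utilA, sum_uCE_mul_of_special]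
  have hB : ∏ j, utilB (wCE m) x j = ∏ j : Fin (m + 1), x 0 j.succ := by
    simp [Fin.prod_univ_succ, utilB, wCE, Fin.succ_ne_zero, hcol]
  rw [nashProduct, hA, hB]

variable (m) in
def symNashProduct (y : ℝ) : ℝ :=
  (1 - ((m : ℝ) + 1) * y) * (((m : ℝ) + 1) * y) * y ^ (m + 1)

variable (m) in
noncomputable def yStar : ℝ := ((m : ℝ) + 2) / (((m : ℝ) + 1) * ((m : ℝ) + 3))

theorem yStar_pos : 0 < yStar m := by
  unfold yStar; positivity

theorem yStar_le : yStar m ≤ 1 / ((m : ℝ) + 1) := by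
  rw [yStar, div_le_div_iff₀ (by positivity) (by positivity)]
  nlinarith

theorem symNashProduct_lt_of_ne_yStar {y : ℝ} (hy : 0 ≤ y) (hne : y ≠ yStar m) :
    symNashProduct m y < symNashProduct m (yStar m) := by
  have hform : ∀ y,
      symNashProduct m y = ((m : ℝ) + 1) * (y ^ (m + 2) * (1 - ((m : ℝ) + 1) * y)) :=
    fun y => by rw [symNashProduct]; ring
  have hyStar : yStar m = ((m + 2 : ℕ) : ℝ) / (((m : ℝ) + 1) * ((m + 2 : ℕ) + 1)) := by
    rw [yStar]; push_cast; ring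
  rw [hform, hform, hyStar]
  rw [hyStar] at hne
  exact mul_lt_mul_of_pos_left
    (pow_mul_one_sub_mul_lt (Nat.succ_ne_zero _) (by positivity) hy hne) (by positivity)

theorem symNashProduct_le_yStar {y : ℝ} (hy : 0 ≤ y) :
    symNashProduct m y ≤ symNashProduct m (yStar m) := by
  rcases eq_or_ne y (yStar m) with rfl | hne
  · rfl
  · exact (symNashProduct_lt_of_ne_yStar hy hne).le

theorem symNashProduct_yStar_pos : 0 < symNashProduct m (yStar m) := by
  have h1 : 0 < 1 - ((m : ℝ) + 1) * yStar m := by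
    rw [yStar]; field_simp; linarith
  have h0 := yStar_pos (m := m)
  unfold symNashProduct; positivity

variable (m) in
noncomputable def symAlloc (y : ℝ) : Fin (m + 2) → Fin (m + 2) → ℝ := fun i j =>
  if i = 0 then (if j = 0 then 1 - ((m : ℝ) + 1) * y else y)
  else if i = 1 then (if j = 0 then ((m : ℝ) + 1) * y else 1 / ((m : ℝ) + 1) - y)
  else (if j = 0 then 0 else 1 / ((m : ℝ) + 1))

theorem isPM_symAlloc {y : ℝ} (hy0 : 0 ≤ y) (hy1 : y ≤ 1 / ((m : ℝ) + 1)) :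
    isPM (symAlloc m y) := by
  have hm : (0 : ℝ) < m + 1 := by positivity
  have hy1' : ((m : ℝ) + 1) * y ≤ 1 := by rwa [le_div_iff₀' hm] at hy1
  refine ⟨fun i j => ?_, fun i => ?_, fun j => ?_⟩
  · unfold symAlloc
    split_ifs <;> positivity
  · have hrow : ∀ α β : ℝ,
        ∑ j : Fin (m + 2), (if j = 0 then α else β) = α + (m + 1) * β := fun α β => by
      rw [Fin.sum_ite_eq_zero]; push_cast; ring
    unfold symAlloc
    split_ifs <;> rw [hrow] <;> field_simp <;> ring
  · unfold symAlloc
    rw [Fin.sum_ite_eq_zero_ite_eq_one]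
    split_ifs <;> field_simp <;> ring

theorem nashProduct_symAlloc {y : ℝ} (hy0 : 0 ≤ y) (hy1 : y ≤ 1 / ((m : ℝ) + 1)) :
    nashProduct (uCE m) (wCE m) (symAlloc m y) = symNashProduct m y := by
  obtain ⟨-, hrow, hcol⟩ := isPM_symAlloc hy0 hy1
  rw [nashProduct_uCE_wCE hrow (hcol 0)]
  simp [symAlloc, symNashProduct, Fin.succ_ne_zero]

theorem symNashProduct_one_sub_div (a : ℝ) :
    symNashProduct m ((1 - a) / ((m : ℝ) + 1)) =
      a * (1 - a) * ((1 - a) / ((m : ℝ) + 1)) ^ (m + 1) := by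
  rw [symNashProduct, mul_div_cancel₀ _ (by positivity : (m : ℝ) + 1 ≠ 0)]
  ring

theorem isPM.apply_one_zero_le_one_sub {x : Fin (m + 2) → Fin (m + 2) → ℝ} (hx : isPM x) :
    x 1 0 ≤ 1 - x 0 0 := by
  have hcol0 : x 0 0 + x 1 0 + ∑ i : Fin m, x i.succ.succ 0 = 1 := by
    simpa [Fin.sum_univ_succ, add_assoc] using hx.2.2 0
  have hdummies : 0 ≤ ∑ i : Fin m, x i.succ.succ 0 := Finset.sum_nonneg fun i _ => hx.1 _ _
  linarith

theorem isPM.prod_row_zero_succ_le {x : Fin (m + 2) → Fin (m + 2) → ℝ} (hx : isPM x) :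
    ∏ j : Fin (m + 1), x 0 j.succ ≤ ((1 - x 0 0) / ((m : ℝ) + 1)) ^ (m + 1) := by
  have hrow0 : x 0 0 + ∑ j : Fin (m + 1), x 0 j.succ = 1 := by
    simpa [Fin.sum_univ_succ] using hx.2.1 0
  simpa [← hrow0] using
    Real.prod_le_sum_div_card_pow Finset.univ (f := fun j : Fin (m + 1) => x 0 j.succ)
      fun j _ => hx.1 _ _

theorem isPM.eq_of_maximizes_nashProduct {x : Fin (m + 2) → Fin (m + 2) → ℝ} (hx : isPM x)
    (hmax : ∀ z, isPM z → nashProduct (uCE m) (wCE m) z ≤ nashProduct (uCE m) (wCE m) x) :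
    x 0 0 = 1 / ((m : ℝ) + 3) ∧ x 1 0 = ((m : ℝ) + 2) / ((m : ℝ) + 3) := by
  set a := x 0 0
  set b := x 1 0
  set P := ∏ j : Fin (m + 1), x 0 j.succ
  set y := (1 - a) / ((m : ℝ) + 1)
  have hopt : symNashProduct m (yStar m) ≤ a * b * P := by
    rw [← nashProduct_symAlloc yStar_pos.le yStar_le, ← nashProduct_uCE_wCE hx.2.1 (hx.2.2 0)]
    exact hmax _ (isPM_symAlloc yStar_pos.le yStar_le)
  have ha : 0 ≤ a := hx.1 0 0
  have hb : 0 ≤ b := hx.1 1 0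
  have hab : b ≤ 1 - a := hx.apply_one_zero_le_one_sub
  have hP : P ≤ y ^ (m + 1) := hx.prod_row_zero_succ_le
  have hy : 0 ≤ y := div_nonneg (by linarith) (by positivity)
  have hupper : a * b * P ≤ a * b * y ^ (m + 1) := by gcongr
  have hy_eq : y = yStar m := by
    by_contra hne
    have hlt := symNashProduct_lt_of_ne_yStar hy hne
    rw [symNashProduct_one_sub_div] at hlt
    nlinarith [mul_le_mul_of_nonneg_right hab (mul_nonneg ha (pow_nonneg hy (m + 1)))]
  have ha_eq : a = 1 / ((m : ℝ) + 3) := by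
    rw [yStar, div_eq_div_iff (by positivity) (by positivity)] at hy_eq
    field_simp
    nlinarith
  have hb_eq : 1 - a = ((m : ℝ) + 2) / ((m : ℝ) + 3) := by
    rw [ha_eq]; field_simp; ring
  refine ⟨ha_eq, le_antisymm (hb_eq ▸ hab) (hb_eq ▸ ?_)⟩
  have hpos := symNashProduct_yStar_pos (m := m)
  rw [← hy_eq, symNashProduct_one_sub_div] at hopt hpos
  have hc : 0 < a * y ^ (m + 1) := by
    by_contra h
    nlinarith
  refine le_of_mul_le_mul_right ?_ hc
  calc (1 - a) * (a * y ^ (m + 1)) = a * (1 - a) * y ^ (m + 1) := by ring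
    _ ≤ a * b * y ^ (m + 1) := hopt.trans hupper
    _ = b * (a * y ^ (m + 1)) := by ring

end Counterexample

/-- with `n = m + 2`, the symmetric Nash product
g(y) = (1 − (n−1)y)·((n−1)y)·y^{n−1} on [0, 1/(n−1)] is maximized at
y = n/(n²−1); consequently at the Nash bargaining solution agent i gets
utility 1/(n+1), agent i' holds u_i-value n/(n+1), so
u_i·x_i = (1/n)·u_i·x_{i'}, even though every agent in B weakly prefers i to i'. -/
theorem nash_strong_justified_envy (m : ℕ) :
    (∀ y : ℝ, 0 ≤ y → y ≤ 1 / ((m : ℝ) + 1) →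
      (1 - ((m : ℝ) + 1) * y) * (((m : ℝ) + 1) * y) * y ^ (m + 1) ≤
      (1 - ((m : ℝ) + 1) * (((m : ℝ) + 2) / (((m : ℝ) + 2) ^ 2 - 1))) *
        (((m : ℝ) + 1) * (((m : ℝ) + 2) / (((m : ℝ) + 2) ^ 2 - 1))) *
        (((m : ℝ) + 2) / (((m : ℝ) + 2) ^ 2 - 1)) ^ (m + 1)) ∧
    ∀ x : Fin (m + 2) → Fin (m + 2) → ℝ, isPM x →
      (∀ z, isPM z →
        (∏ i, utilA (uCE m) z i) * (∏ j, utilB (wCE m) z j) ≤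
        (∏ i, utilA (uCE m) x i) * (∏ j, utilB (wCE m) x j)) →
      utilA (uCE m) x 0 = 1 / ((m : ℝ) + 3) ∧
      (∑ j, uCE m 0 j * x 1 j) = ((m : ℝ) + 2) / ((m : ℝ) + 3) ∧
      utilA (uCE m) x 0 = (1 / ((m : ℝ) + 2)) * ∑ j, uCE m 0 j * x 1 j ∧
      ∀ j : Fin (m + 2), wCE m j 1 ≤ wCE m j 0 := by
  have hyStar : ((m : ℝ) + 2) / (((m : ℝ) + 2) ^ 2 - 1) = yStar m := by
    rw [yStar]; ring
  refine ⟨fun y hy _ => hyStar ▸ symNashProduct_le_yStar hy, fun x hx hmax => ?_⟩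
  obtain ⟨ha, hb⟩ := hx.eq_of_maximizes_nashProduct hmax
  have hi : utilA (uCE m) x 0 = x 0 0 := sum_uCE_mul_of_special (Or.inl rfl) (x 0)
  have hi' : ∑ j, uCE m 0 j * x 1 j = x 1 0 := sum_uCE_mul_of_special (Or.inl rfl) (x 1)
  refine ⟨hi.trans ha, hi'.trans hb, ?_, fun j => ?_⟩
  · rw [hi, hi', ha, hb]
    field_simp
  · by_cases hj : j = 0 <;> simp [wCE, hj]
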